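/- arXiv:2408.11977 — 8 statements merged into one kernel-verified Lean document; each statement's English description precedes it below -/
import Mathlib

section
/- Let s > 0, A ∈ ℝ, and λ ≥ 0, and define h : ℝ → ℝ by h(x) = s·x² + A·x + λ²·(1 if x ≠ 0 else 0). If λ² ≤ A²/(4s), then x̂ = −A/(2s) is a global minimizer of h, i.e., h(−A/(2s)) ≤ h(x) for all x ∈ ℝ; if λ² > A²/(4s), then 0 is the unique global minimizer of h, i.e., h(0) < h(x) for all x ≠ 0. -/
/-! Completing the square, `s x² + A x = s (x + A/(2s))² - A²/(4s)`, shows that the smooth part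
of `h` is bounded below by `-A²/(4s)`, with equality at `x̂ = -A/(2s)`. Off zero `h` pays the
penalty `λ²`, so `h ≥ λ² - A²/(4s)` there, while `h 0 = 0`; the sign of `λ² - A²/(4s)` decides
which of the two candidates `x̂` and `0` wins. -/

lemma mul_sq_add_mul_eq_complete_square {s : ℝ} (hs : s ≠ 0) (A x : ℝ) :
    s * x ^ 2 + A * x = s * (x + A / (2 * s)) ^ 2 - A ^ 2 / (4 * s) := by
  field_simp
  ring

lemma neg_sq_div_le_mul_sq_add_mul {s : ℝ} (hs : 0 < s) (A x : ℝ) :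
    -(A ^ 2 / (4 * s)) ≤ s * x ^ 2 + A * x := by
  rw [mul_sq_add_mul_eq_complete_square hs.ne']
  linarith [mul_nonneg hs.le (sq_nonneg (x + A / (2 * s)))]

lemma mul_sq_add_mul_vertex {s : ℝ} (hs : s ≠ 0) (A : ℝ) :
    s * (-A / (2 * s)) ^ 2 + A * (-A / (2 * s)) = -(A ^ 2 / (4 * s)) := by
  rw [mul_sq_add_mul_eq_complete_square hs]
  ring

theorem stmt_0_general (s A lam : ℝ) (hs : 0 < s)
    (h : ℝ → ℝ)
    (hh : ∀ x : ℝ, h x = s * x ^ 2 + A * x + lam ^ 2 * (if x ≠ 0 then 1 else 0)) :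
    (lam ^ 2 ≤ A ^ 2 / (4 * s) → ∀ x : ℝ, h (-A / (2 * s)) ≤ h x) ∧
    (lam ^ 2 > A ^ 2 / (4 * s) → ∀ x : ℝ, x ≠ 0 → h 0 < h x) := by
  have h_zero : h 0 = 0 := by simp [hh]
  have h_ne_zero {x : ℝ} (hx : x ≠ 0) : lam ^ 2 - A ^ 2 / (4 * s) ≤ h x := by
    rw [hh, if_pos hx]
    linarith [neg_sq_div_le_mul_sq_add_mul hs A x]
  constructor
  · intro hle x
    have h_vertex : h (-A / (2 * s)) ≤ lam ^ 2 - A ^ 2 / (4 * s) := by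
      rw [hh, mul_sq_add_mul_vertex hs.ne']
      split_ifs <;> linarith [sq_nonneg lam]
    rcases eq_or_ne x 0 with rfl | hx
    · linarith
    · linarith [h_ne_zero hx]
  · intro hgt x hx
    linarith [h_ne_zero hx]

/-- Proposition 1 (off-diagonal case): minimizing
`h(x) = s x² + A x + λ² · 𝟙[x ≠ 0]` over `x ∈ ℝ`.
If `λ² ≤ A²/(4s)` then `x̂ = -A/(2s)` is a global minimizer; if `λ² > A²/(4s)`
then `0` is the unique global minimizer. -/
theorem stmt_0 (s A lam : ℝ) (hs : 0 < s) (hlam : 0 ≤ lam)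
    (h : ℝ → ℝ)
    (hh : ∀ x : ℝ, h x = s * x ^ 2 + A * x + lam ^ 2 * (if x ≠ 0 then 1 else 0)) :
    (lam ^ 2 ≤ A ^ 2 / (4 * s) → ∀ x : ℝ, h (-A / (2 * s)) ≤ h x) ∧
    (lam ^ 2 > A ^ 2 / (4 * s) → ∀ x : ℝ, x ≠ 0 → h 0 < h x) :=
  stmt_0_general s A lam hs h hh
end

section
/- Let Σ̂, Γ ∈ ℝ^{m×m} and fix indices u, v ∈ {1,…,m}. For x ∈ ℝ let Γ(x) be the matrix equal to Γ except that its (u,v) entry is x. Then the function x ↦ tr(Γ(x) Γ(x)ᵀ Σ̂) is differentiable with derivative at x equal to 2 Σ̂_{uu} x + A_{uv}, where A_{uv} := Σ_{j≠u} Γ_{jv} Σ̂_{ju} + Σ_{k≠u} Γ_{kv} Σ̂_{uk}. -/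
/-! Writing `Γ(y) = Γ(0) + y E_{uv}` with `E_{uv}` the matrix unit, `tr(Γ(y) Γ(y)ᵀ Σ̂)` is a quadratic
polynomial in `y`. Its leading coefficient `tr(E_{uv} E_{uv}ᵀ Σ̂)` is `Σ̂ᵤᵤ`, and its linear
coefficient `tr(Γ(0) E_{uv}ᵀ Σ̂) + tr(E_{uv} Γ(0)ᵀ Σ̂)` picks out column `v` of `Γ(0)`, i.e. the
entries `Γ_{kv}` with `k ≠ u`, against row and column `u` of `Σ̂`. -/

namespace Matrix

section UpdateEntry

variable {m n α : Type*} [DecidableEq m] [DecidableEq n]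

def updateEntry (M : Matrix m n α) (u : m) (v : n) (y : α) : Matrix m n α :=
  of fun i j => if i = u ∧ j = v then y else M i j

theorem updateEntry_eq_add_smul_single [Semiring α] (M : Matrix m n α) (u : m) (v : n) (y : α) :
    M.updateEntry u v y = M.updateEntry u v 0 + y • single u v 1 := by
  ext i j
  by_cases h : i = u ∧ j = v
  · obtain ⟨rfl, rfl⟩ := h
    simp [updateEntry]
  · have h' : ¬(u = i ∧ v = j) := fun ⟨hu, hv⟩ => h ⟨hu.symm, hv.symm⟩
    simp [updateEntry, single, h, h']

theorem sum_updateEntry_zero_mul [Fintype m] [NonUnitalNonAssocSemiring α] (M : Matrix m n α)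
    (u : m) (v : n) (f : m → α) :
    ∑ k, M.updateEntry u v 0 k v * f k = ∑ k ∈ Finset.univ.filter (· ≠ u), M k v * f k := by
  rw [Finset.sum_filter]
  refine Finset.sum_congr rfl fun k _ => ?_
  by_cases hk : k = u <;> simp [updateEntry, hk]

end UpdateEntry

section Trace

variable {n 𝕜 : Type*} [Fintype n]

theorem trace_add_smul_mul_transpose_mul [CommRing 𝕜] (A E S : Matrix n n 𝕜) (y : 𝕜) :
    trace ((A + y • E) * (A + y • E)ᵀ * S) =
      trace (A * Aᵀ * S) + (trace (A * Eᵀ * S) + trace (E * Aᵀ * S)) * y +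
        trace (E * Eᵀ * S) * y ^ 2 := by
  simp only [transpose_add, transpose_smul, Matrix.add_mul, Matrix.mul_add, Matrix.smul_mul,
    Matrix.mul_smul, trace_add, trace_smul, smul_eq_mul]
  ring

theorem hasDerivAt_trace_add_smul_mul_transpose_mul [NontriviallyNormedField 𝕜]
    (A E S : Matrix n n 𝕜) (x : 𝕜) :
    HasDerivAt (fun y => trace ((A + y • E) * (A + y • E)ᵀ * S))
      (2 * trace (E * Eᵀ * S) * x + (trace (A * Eᵀ * S) + trace (E * Aᵀ * S))) x := by
  rw [funext (trace_add_smul_mul_transpose_mul A E S)]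
  refine ((((hasDerivAt_id' x).const_mul _).const_add _).add
    ((hasDerivAt_pow 2 x).const_mul _)).congr_deriv ?_
  ring

variable [DecidableEq n] [CommRing 𝕜]

theorem trace_single_one_mul_transpose_mul (M S : Matrix n n 𝕜) (u v : n) :
    trace (single u v 1 * Mᵀ * S) = ∑ k, M k v * S k u := by
  rw [Matrix.mul_assoc, trace_single_mul, one_smul, mul_apply]
  rfl

theorem trace_mul_transpose_single_one_mul (M S : Matrix n n 𝕜) (u v : n) :
    trace (M * (single u v 1)ᵀ * S) = ∑ k, M k v * S u k := by
  rw [trace_mul_cycle, transpose_single, trace_mul_single, MulOpposite.op_one, one_smul, mul_apply]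
  simp_rw [mul_comm]

theorem trace_single_one_mul_transpose_single_one_mul (S : Matrix n n 𝕜) (u v : n) :
    trace (single u v 1 * (single u v 1)ᵀ * S) = S u u := by
  rw [transpose_single, single_mul_single_same, trace_single_mul, one_mul, one_smul]

end Trace

end Matrix

open Matrix in
/-- The derivative of `x ↦ tr(Γ(x) Γ(x)ᵀ Σ̂)` at `x`, where `Γ(x)` agrees with `Γ`
except that its `(u,v)` entry is `x`, equals `2 Σ̂ᵤᵤ x + A_{uv}` with
`A_{uv} = ∑_{j≠u} Γ_{jv} Σ̂_{ju} + ∑_{k≠u} Γ_{kv} Σ̂_{uk}`. -/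
theorem stmt_2 {m : ℕ} (Sig Γ : Matrix (Fin m) (Fin m) ℝ) (u v : Fin m) (x : ℝ) :
    HasDerivAt
      (fun y : ℝ =>
        Matrix.trace ((Matrix.of fun i j => if i = u ∧ j = v then y else Γ i j) *
          (Matrix.of fun i j => if i = u ∧ j = v then y else Γ i j)ᵀ * Sig))
      (2 * Sig u u * x +
        ((∑ j ∈ Finset.univ.filter (· ≠ u), Γ j v * Sig j u) +
          ∑ k ∈ Finset.univ.filter (· ≠ u), Γ k v * Sig u k)) x := by
  have h := hasDerivAt_trace_add_smul_mul_transpose_mul (Γ.updateEntry u v 0) (single u v 1) Sig x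
  rw [trace_single_one_mul_transpose_single_one_mul, trace_mul_transpose_single_one_mul,
    trace_single_one_mul_transpose_mul, sum_updateEntry_zero_mul, sum_updateEntry_zero_mul,
    add_comm (∑ k ∈ _, _ * Sig u k)] at h
  simp only [← updateEntry_eq_add_smul_single] at h
  exact h
end

section
/- Let Σ̂ ∈ ℝ^{m×m} be symmetric and satisfy xᵀ Σ̂ x ≥ μ ‖x‖² for all x ∈ ℝ^m for some μ > 0. Then the function ℓ(Γ) = Σ_{i=1}^m −2·log(Γ_{ii}) + tr(Γ Γᵀ Σ̂) is strongly convex with modulus 2μ (with respect to the Frobenius norm) on the convex set {Γ ∈ ℝ^{m×m} : Γ_{ii} > 0 for all i}; that is, for all Γ, Γ' in this set and t ∈ [0,1], ℓ(tΓ + (1−t)Γ') ≤ t ℓ(Γ) + (1−t) ℓ(Γ') − μ t(1−t) ‖Γ − Γ'‖_F². -/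
open Matrix

private lemma bsym' {m : ℕ} (Sig A B : Matrix (Fin m) (Fin m) ℝ) (hsymm : Sig.IsSymm) :
    trace (B * Aᵀ * Sig) = trace (A * Bᵀ * Sig) := by
  have h : (B * Aᵀ * Sig)ᵀ = Sig * (A * Bᵀ) := by
    rw [transpose_mul, transpose_mul, transpose_transpose, hsymm.eq]
  rw [← trace_transpose (B * Aᵀ * Sig), h, trace_mul_comm]

private lemma qlow' {m : ℕ} (Sig : Matrix (Fin m) (Fin m) ℝ) (hsymm : Sig.IsSymm) (μ : ℝ)
    (hpd : ∀ x : Fin m → ℝ, μ * ∑ i, x i ^ 2 ≤ x ⬝ᵥ Sig *ᵥ x)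
    (D : Matrix (Fin m) (Fin m) ℝ) :
    μ * ∑ i, ∑ j, (D i j) ^ 2 ≤ trace (D * Dᵀ * Sig) := by
  have key : trace (D * Dᵀ * Sig) = ∑ j, (fun i => D i j) ⬝ᵥ Sig *ᵥ (fun i => D i j) := by
    simp only [trace, diag, mul_apply, transpose_apply, dotProduct, mulVec, Finset.sum_mul,
      Finset.mul_sum]
    have h2 : ∀ a : Fin m, (∑ b, ∑ c, D a c * D b c * Sig b a)
        = ∑ c, ∑ b, D a c * D b c * Sig b a := fun a => by rw [Finset.sum_comm]
    rw [Finset.sum_congr rfl fun a _ => h2 a, Finset.sum_comm]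
    refine Finset.sum_congr rfl fun c _ => Finset.sum_congr rfl fun a _ =>
      Finset.sum_congr rfl fun b _ => ?_
    rw [← hsymm.apply a b]
    ring
  rw [key]
  have h1 : μ * ∑ i, ∑ j, (D i j) ^ 2 = ∑ j, μ * ∑ i, (D i j)^2 := by
    rw [Finset.sum_comm (f := fun i j => (D i j)^2), Finset.mul_sum]
  rw [h1]
  exact Finset.sum_le_sum fun j _ => hpd _

open Matrix in
/-- Strong convexity (with modulus `2μ` w.r.t. the Frobenius norm) of
`ℓ(Γ) = ∑ᵢ -2 log Γᵢᵢ + tr(Γ Γᵀ Σ̂)` on the set of matrices with positive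
diagonal, when `xᵀ Σ̂ x ≥ μ ‖x‖²` for all `x` and `μ > 0`. -/
theorem stmt_4 {m : ℕ} (Sig : Matrix (Fin m) (Fin m) ℝ) (hsymm : Sig.IsSymm)
    (μ : ℝ) (hμ : 0 < μ)
    (hpd : ∀ x : Fin m → ℝ, μ * ∑ i, x i ^ 2 ≤ x ⬝ᵥ Sig *ᵥ x)
    (ℓ : Matrix (Fin m) (Fin m) ℝ → ℝ)
    (hℓ : ∀ Γ, ℓ Γ = (∑ i, -2 * Real.log (Γ i i)) + Matrix.trace (Γ * Γᵀ * Sig)) :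
    ∀ Γ Γ' : Matrix (Fin m) (Fin m) ℝ,
      (∀ i, 0 < Γ i i) → (∀ i, 0 < Γ' i i) →
      ∀ t : ℝ, 0 ≤ t → t ≤ 1 →
        ℓ (t • Γ + (1 - t) • Γ') ≤
          t * ℓ Γ + (1 - t) * ℓ Γ' -
            μ * t * (1 - t) * ∑ i, ∑ j, (Γ i j - Γ' i j) ^ 2 := by
  intro Γ Γ' hΓ hΓ' t ht0 ht1
  set s : ℝ := 1 - t with hs
  have hs0 : 0 ≤ s := by linarith
  -- abbreviations
  set QΓ := trace (Γ * Γᵀ * Sig) with hQΓ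
  set QΓ' := trace (Γ' * Γ'ᵀ * Sig) with hQΓ'
  set Bb := trace (Γ * Γ'ᵀ * Sig) with hBb
  have hB' : trace (Γ' * Γᵀ * Sig) = Bb := bsym' Sig Γ Γ' hsymm
  -- quadratic expansion of the combination
  have hcombo : trace ((t • Γ + s • Γ') * (t • Γ + s • Γ')ᵀ * Sig)
      = t^2 * QΓ + 2*t*s*Bb + s^2 * QΓ' := by
    have : (t • Γ + s • Γ') * (t • Γ + s • Γ')ᵀ * Sig
        = (t*t) • (Γ * Γᵀ * Sig) + (t*s) • (Γ * Γ'ᵀ * Sig)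
          + ((s*t) • (Γ' * Γᵀ * Sig) + (s*s) • (Γ' * Γ'ᵀ * Sig)) := by
      rw [transpose_add, transpose_smul, transpose_smul]
      simp only [add_mul, mul_add, smul_mul_assoc, mul_smul_comm, smul_smul]
      module
    rw [this]
    simp only [trace_add, trace_smul, smul_eq_mul, hB']
    ring
  -- expansion of the difference
  have hdiff : trace ((Γ - Γ') * (Γ - Γ')ᵀ * Sig) = QΓ - 2*Bb + QΓ' := by
    have : (Γ - Γ') * (Γ - Γ')ᵀ * Sig
        = (Γ * Γᵀ * Sig - Γ * Γ'ᵀ * Sig) - (Γ' * Γᵀ * Sig - Γ' * Γ'ᵀ * Sig) := by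
      rw [transpose_sub]
      simp only [sub_mul, mul_sub]
      abel
    rw [this]
    simp only [trace_sub, hB']
    ring
  -- lower bound on the difference quadratic
  have hqd : μ * ∑ i, ∑ j, (Γ i j - Γ' i j) ^ 2 ≤ QΓ - 2*Bb + QΓ' := by
    have h := qlow' Sig hsymm μ hpd (Γ - Γ')
    simp only [Matrix.sub_apply] at h
    rw [hdiff] at h
    exact h
  -- log part
  have hlog : (∑ i, -2 * Real.log ((t • Γ + s • Γ') i i))
      ≤ t * (∑ i, -2 * Real.log (Γ i i)) + s * (∑ i, -2 * Real.log (Γ' i i)) := by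
    rw [Finset.mul_sum, Finset.mul_sum, ← Finset.sum_add_distrib]
    refine Finset.sum_le_sum fun i _ => ?_
    have hcc := strictConcaveOn_log_Ioi.concaveOn.2
      (Set.mem_Ioi.mpr (hΓ i)) (Set.mem_Ioi.mpr (hΓ' i)) ht0 hs0 (by ring)
    simp only [smul_eq_mul] at hcc
    have happ : (t • Γ + s • Γ') i i = t * Γ i i + s * Γ' i i := by
      simp [Matrix.add_apply, Matrix.smul_apply, smul_eq_mul]
    rw [happ]
    nlinarith [hcc]
  -- assemble
  rw [hℓ, hℓ, hℓ, hcombo]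
  have hts : 0 ≤ t * s := mul_nonneg ht0 hs0
  have hmul := mul_le_mul_of_nonneg_left hqd hts
  have key : t^2*QΓ + 2*t*s*Bb + s^2*QΓ' = t*QΓ + s*QΓ' - (t*s)*(QΓ - 2*Bb + QΓ') := by
    rw [hs]; ring
  rw [hQΓ] at key hmul
  rw [hQΓ'] at key hmul
  nlinarith [hlog, hmul, key]
end

section
/- Let Σ̂ ∈ ℝ^{m×m} be symmetric positive definite and let c ∈ ℝ. Then the sublevel set {Γ ∈ ℝ^{m×m} : Γ_{ii} > 0 for all i, and ℓ(Γ) ≤ c} is bounded in the Frobenius norm, where ℓ(Γ) = Σ_{i=1}^m −2·log(Γ_{ii}) + tr(Γ Γᵀ Σ̂). -/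
/-!
Positive definiteness gives `ε > 0` with `tr(Γ Γᵀ Σ̂) ≥ ε ‖Γ‖_F²`, since the trace is
the sum of the quadratic forms of `Σ̂` at the columns of `Γ`. The barrier term grows
only logarithmically: `2 log t ≤ (ε/2) t² + 2/ε`. Hence `ℓ(Γ) ≥ (ε/2) ‖Γ‖_F² - 2m/ε`,
so every sublevel set is bounded.
-/

open Matrix
open scoped MatrixOrder

theorem Matrix.PosDef.exists_pos_mul_dotProduct_self_le {n : Type*} [Fintype n] [DecidableEq n]
    {S : Matrix n n ℝ} (hS : S.PosDef) :
    ∃ ε > 0, ∀ x : n → ℝ, ε * (x ⬝ᵥ x) ≤ x ⬝ᵥ (S *ᵥ x) := by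
  cases isEmpty_or_nonempty n
  · exact ⟨1, one_pos, fun x => by simp [dotProduct]⟩
  obtain ⟨ε, hε, hεS⟩ := (CFC.exists_pos_algebraMap_le_iff hS.isHermitian.isSelfAdjoint).2
    fun _ hx => hS.isStrictlyPositive.spectrum_pos hx
  refine ⟨ε, hε, fun x => ?_⟩
  simpa [Algebra.algebraMap_eq_smul_one, sub_mulVec, smul_mulVec, dotProduct_sub] using
    (Matrix.le_iff.1 hεS).dotProduct_mulVec_nonneg x

theorem Matrix.trace_mul_transpose_mul_eq_sum_dotProduct {n l : Type*} [Fintype n] [Fintype l]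
    (Γ : Matrix n l ℝ) (S : Matrix n n ℝ) :
    trace (Γ * Γᵀ * S) = ∑ j, Γᵀ j ⬝ᵥ (S *ᵥ Γᵀ j) := by
  rw [trace_mul_cycle, trace_mul_cycle]
  simp only [trace, diag, mul_apply, dotProduct, mulVec, transpose_apply, Finset.mul_sum,
    Finset.sum_mul, mul_assoc]
  exact Finset.sum_congr rfl fun _ _ => Finset.sum_comm

theorem Matrix.PosDef.exists_pos_mul_sum_sq_le_trace {n l : Type*} [Fintype n] [Fintype l]
    [DecidableEq n] {S : Matrix n n ℝ} (hS : S.PosDef) :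
    ∃ ε > 0, ∀ Γ : Matrix n l ℝ, ε * ∑ i, ∑ j, Γ i j ^ 2 ≤ trace (Γ * Γᵀ * S) := by
  obtain ⟨ε, hε, hεS⟩ := hS.exists_pos_mul_dotProduct_self_le
  refine ⟨ε, hε, fun Γ => ?_⟩
  rw [trace_mul_transpose_mul_eq_sum_dotProduct, Finset.sum_comm, Finset.mul_sum]
  gcongr with j
  simpa [dotProduct, sq] using hεS (Γᵀ j)

theorem Real.two_mul_log_le_mul_sq_add_inv {ε t : ℝ} (hε : 0 < ε) (ht : 0 < t) :
    2 * Real.log t ≤ ε * t ^ 2 + ε⁻¹ := by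
  have hamgm : ε * t ^ 2 + ε⁻¹ - 2 * t = ε * (t - ε⁻¹) ^ 2 := by field_simp; ring
  nlinarith [Real.log_le_sub_one_of_pos ht, mul_nonneg hε.le (sq_nonneg (t - ε⁻¹))]

theorem Matrix.sum_sq_diag_le_sum_sq {n : Type*} [Fintype n] (Γ : Matrix n n ℝ) :
    ∑ i, Γ i i ^ 2 ≤ ∑ i, ∑ j, Γ i j ^ 2 :=
  Finset.sum_le_sum fun i _ =>
    Finset.single_le_sum (f := fun j => Γ i j ^ 2) (fun _ _ => sq_nonneg _) (Finset.mem_univ i)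

open Matrix in
/-- Lemma 2: for a symmetric positive definite `Σ̂`, the sublevel set
`{Γ : Γᵢᵢ > 0 for all i, ℓ(Γ) ≤ c}` of
`ℓ(Γ) = ∑ᵢ -2 log Γᵢᵢ + tr(Γ Γᵀ Σ̂)` is bounded in the Frobenius norm. -/
theorem stmt_5 {m : ℕ} (Sig : Matrix (Fin m) (Fin m) ℝ) (hpd : Sig.PosDef) (c : ℝ) :
    ∃ R : ℝ, ∀ Γ : Matrix (Fin m) (Fin m) ℝ,
      (∀ i, 0 < Γ i i) →
      (∑ i, -2 * Real.log (Γ i i)) + Matrix.trace (Γ * Γᵀ * Sig) ≤ c →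
      Real.sqrt (∑ i, ∑ j, (Γ i j) ^ 2) ≤ R := by
  obtain ⟨ε, hε, htrace⟩ := hpd.exists_pos_mul_sum_sq_le_trace (l := Fin m)
  refine ⟨√(2 * (c + 2 * m / ε) / ε), fun Γ hdiag hℓ => Real.sqrt_le_sqrt ?_⟩
  have hlog : ∑ i, 2 * Real.log (Γ i i) ≤ ε / 2 * ∑ i, ∑ j, Γ i j ^ 2 + 2 * m / ε :=
    calc ∑ i, 2 * Real.log (Γ i i)
        ≤ ∑ i, (ε / 2 * Γ i i ^ 2 + (ε / 2)⁻¹) :=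
          Finset.sum_le_sum fun i _ =>
            Real.two_mul_log_le_mul_sq_add_inv (by positivity) (hdiag i)
      _ = ε / 2 * ∑ i, Γ i i ^ 2 + 2 * m / ε := by
          simp only [Finset.sum_add_distrib, Finset.mul_sum, Finset.sum_const, Finset.card_univ,
            Fintype.card_fin, nsmul_eq_mul]
          ring
      _ ≤ ε / 2 * ∑ i, ∑ j, Γ i j ^ 2 + 2 * m / ε := by
          gcongr ε / 2 * ?_ + _; exact Γ.sum_sq_diag_le_sum_sq
  have hneg : ∑ i, -2 * Real.log (Γ i i) = -∑ i, 2 * Real.log (Γ i i) := by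
    simp only [neg_mul, Finset.sum_neg_distrib]
  rw [le_div_iff₀ hε]
  linarith [htrace Γ]
end

section
/- Let Σ̂ ∈ ℝ^{m×m} be symmetric and Γ ∈ ℝ^{m×m}. Suppose that: (a) for every pair u ≠ v with Γ_{uv} ≠ 0, the stationarity condition 2 Σ̂_{uu} Γ_{uv} + A_{uv} = 0 holds; and (b) for every u, Γ_{uu} ≠ 0 and −2/Γ_{uu} + 2 Σ̂_{uu} Γ_{uu} + A_{uu} = 0. Then: (i) for every u ≠ v with Γ_{uv} ≠ 0, (Σ̂ Γ)_{uv} = 0; and (ii) every diagonal entry of the matrix Γ Γᵀ Σ̂ equals 1, i.e., (Γ Γᵀ Σ̂)_{ii} = 1 for all i. -/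
/-!
Symmetry of `Σ̂` collapses both sums in `A_{uv}` to `(Σ̂ Γ)_{uv} - Σ̂_{uu} Γ_{uv}`, so the
stationarity conditions read `(Σ̂ Γ)_{uv} = 0` off the diagonal and `Γ_{uu} (Σ̂ Γ)_{uu} = 1` on it.
Since `(Γ Γᵀ Σ̂)_{ii} = ∑_j Γ_{ij} (Σ̂ Γ)_{ij}`, only the term `j = i` survives, and it is `1`.
-/

open Finset

namespace Matrix

variable {n R : Type*} [Fintype n] [CommRing R]

theorem mul_transpose_mul_apply_self (A B : Matrix n n R) (i : n) :
    (B * Bᵀ * A) i i = ∑ j, B i j * (Aᵀ * B) i j := by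
  rw [Matrix.mul_assoc, mul_apply, ← transpose_transpose A, ← transpose_mul, transpose_transpose]
  rfl

variable [DecidableEq n]

theorem sum_filter_ne_mul_apply (A B : Matrix n n R) (u v : n) :
    ∑ k ∈ univ.filter (· ≠ u), B k v * A u k = (A * B) u v - A u u * B u v := by
  rw [mul_apply, filter_ne', ← sum_erase_add _ _ (mem_univ u)]
  simp only [mul_comm (B _ v)]
  ring

theorem IsSymm.sum_filter_ne_add_sum_filter_ne {A : Matrix n n R} (hA : A.IsSymm)
    (B : Matrix n n R) (u v : n) :
    (∑ j ∈ univ.filter (· ≠ u), B j v * A j u) + ∑ k ∈ univ.filter (· ≠ u), B k v * A u k =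
      2 * ((A * B) u v - A u u * B u v) := by
  simp only [hA.apply u, sum_filter_ne_mul_apply]
  ring

end Matrix

open Matrix in
/-- Items (ii) and (iii) of Lemma 5: if `Γ` satisfies the coordinate-wise
stationarity conditions (a) `2 Σ̂ᵤᵤ Γᵤᵥ + Aᵤᵥ = 0` whenever `u ≠ v` and
`Γᵤᵥ ≠ 0`, and (b) `Γᵤᵤ ≠ 0` and `-2/Γᵤᵤ + 2 Σ̂ᵤᵤ Γᵤᵤ + Aᵤᵤ = 0` for all `u`,
then `(Σ̂ Γ)ᵤᵥ = 0` on the off-diagonal support of `Γ` and every diagonal entry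
of `Γ Γᵀ Σ̂` equals `1`. Here
`A_{uv} = ∑_{j≠u} Γ_{jv} Σ̂_{ju} + ∑_{k≠u} Γ_{kv} Σ̂_{uk}`. -/
theorem stmt_8 {m : ℕ} (Sig Γ : Matrix (Fin m) (Fin m) ℝ) (hsymm : Sig.IsSymm)
    (ha : ∀ u v : Fin m, u ≠ v → Γ u v ≠ 0 →
      2 * Sig u u * Γ u v +
        ((∑ j ∈ Finset.univ.filter (· ≠ u), Γ j v * Sig j u) +
          ∑ k ∈ Finset.univ.filter (· ≠ u), Γ k v * Sig u k) = 0)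
    (hb : ∀ u : Fin m, Γ u u ≠ 0 ∧
      -2 / Γ u u + 2 * Sig u u * Γ u u +
        ((∑ j ∈ Finset.univ.filter (· ≠ u), Γ j u * Sig j u) +
          ∑ k ∈ Finset.univ.filter (· ≠ u), Γ k u * Sig u k) = 0) :
    (∀ u v : Fin m, u ≠ v → Γ u v ≠ 0 → (Sig * Γ) u v = 0) ∧
    (∀ i : Fin m, (Γ * Γᵀ * Sig) i i = 1) := by
  have hoff : ∀ u v, u ≠ v → Γ u v ≠ 0 → (Sig * Γ) u v = 0 := by
    intro u v huv hΓ
    have h := ha u v huv hΓ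
    rw [hsymm.sum_filter_ne_add_sum_filter_ne] at h
    linarith
  have hdiag : ∀ u, Γ u u * (Sig * Γ) u u = 1 := by
    intro u
    obtain ⟨hΓ, h⟩ := hb u
    rw [hsymm.sum_filter_ne_add_sum_filter_ne] at h
    field_simp at h
    linarith
  refine ⟨hoff, fun i => ?_⟩
  rw [mul_transpose_mul_apply_self, hsymm.eq, sum_eq_single i, hdiag]
  · intro j _ hji
    by_cases hΓ : Γ i j = 0
    · rw [hΓ, zero_mul]
    · rw [hoff i j (Ne.symm hji) hΓ, mul_zero]
  · exact fun h => absurd (mem_univ i) h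
end

section
/- Let Σ̂ ∈ ℝ^{m×m} be symmetric with Σ̂_{uu} ≥ 0, let Γ ∈ ℝ^{m×m}, let λ ≥ 0, and let u ≠ v be indices with Γ_{uv} ≠ 0 and Γ_{vu} = 0. Suppose: (a) for every pair a ≠ b with Γ_{ab} ≠ 0, (Σ̂ Γ)_{ab} = 0; and (b) for every index i ∉ {u,v} with Γ_{ui} = 0 and Γ_{vi} ≠ 0, |(Σ̂ Γ)_{ui}| ≤ λ·√(Σ̂_{uu}). Then (Γ Γᵀ Σ̂)_{vu} = Σ_{i ∈ F} Γ_{vi} (Σ̂ Γ)_{ui}, where F := {i : i ∉ {u,v}, Γ_{vi} ≠ 0, Γ_{ui} = 0}, and consequently |(Γ Γᵀ Σ̂)_{vu}| ≤ λ·√(Σ̂_{uu})·Σ_{i ∈ F} |Γ_{vi}|. -/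
open Matrix in
/-- Algebraic core of 'Setting I' in the proof of Theorem 2: under the
stationarity condition (a) and the thresholding bound (b), for `u ≠ v` with
`Γᵤᵥ ≠ 0`, `Γᵥᵤ = 0`, the entry `(Γ Γᵀ Σ̂)ᵥᵤ` equals `∑_{i ∈ F} Γᵥᵢ (Σ̂ Γ)ᵤᵢ`
with `F = {i ∉ {u,v} : Γᵥᵢ ≠ 0, Γᵤᵢ = 0}`, and is bounded in absolute value by
`λ √(Σ̂ᵤᵤ) ∑_{i ∈ F} |Γᵥᵢ|`. -/
theorem stmt_13 {m : ℕ} (Sig Γ : Matrix (Fin m) (Fin m) ℝ) (u v : Fin m)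
    (hsymm : Sig.IsSymm) (huu : 0 ≤ Sig u u) (lam : ℝ) (hlam : 0 ≤ lam)
    (huv : u ≠ v) (hΓuv : Γ u v ≠ 0) (hΓvu : Γ v u = 0)
    (ha : ∀ a b : Fin m, a ≠ b → Γ a b ≠ 0 → (Sig * Γ) a b = 0)
    (hb : ∀ i : Fin m, i ≠ u → i ≠ v → Γ u i = 0 → Γ v i ≠ 0 →
      |(Sig * Γ) u i| ≤ lam * Real.sqrt (Sig u u)) :
    ((Γ * Γᵀ * Sig) v u =
      ∑ i ∈ Finset.univ.filter (fun i => i ≠ u ∧ i ≠ v ∧ Γ v i ≠ 0 ∧ Γ u i = 0),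
        Γ v i * (Sig * Γ) u i) ∧
    |(Γ * Γᵀ * Sig) v u| ≤
      lam * Real.sqrt (Sig u u) *
        ∑ i ∈ Finset.univ.filter (fun i => i ≠ u ∧ i ≠ v ∧ Γ v i ≠ 0 ∧ Γ u i = 0),
          |Γ v i| := by

  classical
  set F := Finset.univ.filter (fun i => i ≠ u ∧ i ≠ v ∧ Γ v i ≠ 0 ∧ Γ u i = 0) with hF
  have key : (Γ * Γᵀ * Sig) v u = ∑ i ∈ F, Γ v i * (Sig * Γ) u i := by
    have h1 : (Γ * Γᵀ * Sig) v u = ∑ i, Γ v i * (Sig * Γ) u i := by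
      simp only [Matrix.mul_apply, Matrix.transpose_apply, Finset.sum_mul,
        Finset.mul_sum]
      rw [Finset.sum_comm]
      refine Finset.sum_congr rfl fun i _ => Finset.sum_congr rfl fun j _ => ?_
      have : Sig j u = Sig u j := by
        rw [← hsymm.apply j u]
      rw [this]; ring
    rw [h1]
    symm
    apply Finset.sum_filter_of_ne
    intro i _ hne
    refine ⟨?_, ?_, ?_, ?_⟩
    · intro h0; rw [h0] at hne; exact hne (by rw [hΓvu, zero_mul])
    · intro h0; rw [h0] at hne; exact hne (by rw [ha u v huv hΓuv, mul_zero])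
    · intro h0; exact hne (by rw [h0, zero_mul])
    · by_contra h0
      have hiu : i ≠ u := by intro h1; rw [h1] at hne; exact hne (by rw [hΓvu, zero_mul])
      exact hne (by rw [ha u i (Ne.symm hiu) h0, mul_zero])
  refine ⟨key, ?_⟩
  rw [key]
  calc |∑ i ∈ F, Γ v i * (Sig * Γ) u i| ≤ ∑ i ∈ F, |Γ v i * (Sig * Γ) u i| :=
        Finset.abs_sum_le_sum_abs _ _
    _ ≤ ∑ i ∈ F, |Γ v i| * (lam * Real.sqrt (Sig u u)) := by
        refine Finset.sum_le_sum fun i hi => ?_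
        rw [abs_mul]
        simp only [hF, Finset.mem_filter] at hi
        exact mul_le_mul_of_nonneg_left
          (hb i hi.2.1 hi.2.2.1 hi.2.2.2.2 hi.2.2.2.1) (abs_nonneg _)
    _ = lam * Real.sqrt (Sig u u) * ∑ i ∈ F, |Γ v i| := by
        rw [← Finset.sum_mul, mul_comm]
end

section
/- Let Σ̂ ∈ ℝ^{m×m} be symmetric with Σ̂_{vv} ≥ 0, let Γ ∈ ℝ^{m×m}, let λ ≥ 0, and let u ≠ v be indices with Γ_{uv} = 0 and Γ_{vu} = 0. Suppose: (a) for every pair a ≠ b with Γ_{ab} ≠ 0, (Σ̂ Γ)_{ab} = 0; and (b) |(Σ̂ Γ)_{vu}| ≤ λ·√(Σ̂_{vv}), and for every index i ∉ {u,v} with Γ_{ui} ≠ 0 and Γ_{vi} = 0, |(Σ̂ Γ)_{vi}| ≤ λ·√(Σ̂_{vv}). Then (Γ Γᵀ Σ̂)_{uv} = Γ_{uu}·(Σ̂ Γ)_{vu} + Σ_{i ∈ F} Γ_{ui} (Σ̂ Γ)_{vi}, where F := {i : i ∉ {u,v}, Γ_{ui} ≠ 0, Γ_{vi} = 0}, and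 consequently |(Γ Γᵀ Σ̂)_{uv}| ≤ λ·√(Σ̂_{vv})·(|Γ_{uu}| + Σ_{i ∈ F} |Γ_{ui}|). -/
/-!
Symmetry of `Σ̂` turns `(Γ Γᵀ Σ̂)ᵤᵥ` into `∑ᵢ Γᵤᵢ (Σ̂ Γ)ᵥᵢ`. The stationarity condition kills every
term with `Γᵥᵢ ≠ 0`, and `Γᵤᵥ = 0` kills `i = v`, so only `i = u` and `i ∈ F` survive; each of
these is bounded by the thresholding rule.
-/

open Matrix Finset

section
variable {n R : Type*} [Fintype n] [CommRing R]

theorem Matrix.mul_mul_transpose_mul_apply_of_isSymm {S : Matrix n n R} (hS : S.IsSymm)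
    (Γ : Matrix n n R) (u v : n) :
    (Γ * Γᵀ * S) u v = ∑ i, Γ u i * (S * Γ) v i := by
  rw [Matrix.mul_assoc, mul_apply, ← hS.eq, ← transpose_mul, hS.eq]
  rfl

variable [DecidableEq n] [DecidableEq R]

theorem Matrix.mul_mul_transpose_mul_apply_eq_sum_insert {S Γ : Matrix n n R} (hS : S.IsSymm)
    {u v : n} (hΓuv : Γ u v = 0) (hv : ∀ i, i ≠ v → Γ v i ≠ 0 → (S * Γ) v i = 0) :
    (Γ * Γᵀ * S) u v =
      ∑ i ∈ insert u (univ.filter fun i => i ≠ u ∧ i ≠ v ∧ Γ u i ≠ 0 ∧ Γ v i = 0),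
        Γ u i * (S * Γ) v i := by
  rw [mul_mul_transpose_mul_apply_of_isSymm hS]
  refine (sum_subset (subset_univ _) fun i _ hi => ?_).symm
  rcases eq_or_ne i v with rfl | hiv
  · rw [hΓuv, zero_mul]
  simp only [mem_insert, mem_filter, mem_univ, true_and, not_or] at hi
  rcases hi with ⟨hiu, hi⟩
  by_cases hΓui : Γ u i = 0
  · rw [hΓui, zero_mul]
  have hΓvi : Γ v i ≠ 0 := fun h => hi ⟨hiu, hiv, hΓui, h⟩
  rw [hv i hiv hΓvi, mul_zero]
end

theorem Finset.abs_sum_mul_le {ι R : Type*} [CommRing R] [LinearOrder R] [IsStrictOrderedRing R]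
    (s : Finset ι) (b y : ι → R) {L : R} (hy : ∀ i ∈ s, |y i| ≤ L) :
    |∑ i ∈ s, b i * y i| ≤ L * ∑ i ∈ s, |b i| := by
  rw [mul_sum]
  refine (abs_sum_le_sum_abs _ _).trans (sum_le_sum fun i hi => ?_)
  rw [abs_mul, mul_comm L]
  exact mul_le_mul_of_nonneg_left (hy i hi) (abs_nonneg _)

open Matrix in
theorem stmt_14_general {m : ℕ} (Sig Γ : Matrix (Fin m) (Fin m) ℝ) (u v : Fin m)
    (hsymm : Sig.IsSymm) (lam : ℝ)
    (hΓuv : Γ u v = 0)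
    (ha : ∀ a b : Fin m, a ≠ b → Γ a b ≠ 0 → (Sig * Γ) a b = 0)
    (hb1 : |(Sig * Γ) v u| ≤ lam * Real.sqrt (Sig v v))
    (hb2 : ∀ i : Fin m, i ≠ u → i ≠ v → Γ u i ≠ 0 → Γ v i = 0 →
      |(Sig * Γ) v i| ≤ lam * Real.sqrt (Sig v v)) :
    ((Γ * Γᵀ * Sig) u v =
      Γ u u * (Sig * Γ) v u +
        ∑ i ∈ Finset.univ.filter (fun i => i ≠ u ∧ i ≠ v ∧ Γ u i ≠ 0 ∧ Γ v i = 0),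
          Γ u i * (Sig * Γ) v i) ∧
    |(Γ * Γᵀ * Sig) u v| ≤
      lam * Real.sqrt (Sig v v) *
        (|Γ u u| +
          ∑ i ∈ Finset.univ.filter (fun i => i ≠ u ∧ i ≠ v ∧ Γ u i ≠ 0 ∧ Γ v i = 0),
            |Γ u i|) := by
  set F := Finset.univ.filter (fun i => i ≠ u ∧ i ≠ v ∧ Γ u i ≠ 0 ∧ Γ v i = 0)
  have huF : u ∉ F := by simp [F]
  have hsum := mul_mul_transpose_mul_apply_eq_sum_insert hsymm hΓuv fun i hiv => ha v i hiv.symm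
  rw [sum_insert huF] at hsum
  refine ⟨hsum, ?_⟩
  have hbound : ∀ i ∈ insert u F, |(Sig * Γ) v i| ≤ lam * Real.sqrt (Sig v v) := by
    intro i hi
    rcases mem_insert.1 hi with rfl | hiF
    · exact hb1
    · obtain ⟨hiu, hiv, hΓui, hΓvi⟩ := (mem_filter.1 hiF).2
      exact hb2 i hiu hiv hΓui hΓvi
  simpa only [hsum, sum_insert huF] using abs_sum_mul_le (insert u F) (Γ u) _ hbound

open Matrix in
/-- Algebraic core of 'Settings II.1 and II.2' in the proof of Theorem 2:
under the stationarity condition (a) and the thresholding bounds (b), for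
`u ≠ v` with `Γᵤᵥ = Γᵥᵤ = 0`, the entry `(Γ Γᵀ Σ̂)ᵤᵥ` equals
`Γᵤᵤ (Σ̂ Γ)ᵥᵤ + ∑_{i ∈ F} Γᵤᵢ (Σ̂ Γ)ᵥᵢ` with
`F = {i ∉ {u,v} : Γᵤᵢ ≠ 0, Γᵥᵢ = 0}`, and is bounded in absolute value by
`λ √(Σ̂ᵥᵥ) (|Γᵤᵤ| + ∑_{i ∈ F} |Γᵤᵢ|)`. -/
theorem stmt_14 {m : ℕ} (Sig Γ : Matrix (Fin m) (Fin m) ℝ) (u v : Fin m)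
    (hsymm : Sig.IsSymm) (hvv : 0 ≤ Sig v v) (lam : ℝ) (hlam : 0 ≤ lam)
    (huv : u ≠ v) (hΓuv : Γ u v = 0) (hΓvu : Γ v u = 0)
    (ha : ∀ a b : Fin m, a ≠ b → Γ a b ≠ 0 → (Sig * Γ) a b = 0)
    (hb1 : |(Sig * Γ) v u| ≤ lam * Real.sqrt (Sig v v))
    (hb2 : ∀ i : Fin m, i ≠ u → i ≠ v → Γ u i ≠ 0 → Γ v i = 0 →
      |(Sig * Γ) v i| ≤ lam * Real.sqrt (Sig v v)) :
    ((Γ * Γᵀ * Sig) u v =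
      Γ u u * (Sig * Γ) v u +
        ∑ i ∈ Finset.univ.filter (fun i => i ≠ u ∧ i ≠ v ∧ Γ u i ≠ 0 ∧ Γ v i = 0),
          Γ u i * (Sig * Γ) v i) ∧
    |(Γ * Γᵀ * Sig) u v| ≤
      lam * Real.sqrt (Sig v v) *
        (|Γ u u| +
          ∑ i ∈ Finset.univ.filter (fun i => i ≠ u ∧ i ≠ v ∧ Γ u i ≠ 0 ∧ Γ v i = 0),
            |Γ u i|) :=
  stmt_14_general Sig Γ u v hsymm lam hΓuv ha hb1 hb2
end

section
/- Let Σ̂ ∈ ℝ^{m×m} be symmetric positive definite and let E ⊆ {1,…,m} × {1,…,m} be a set of index pairs containing all diagonal pairs (i,i). Then the function ℓ(Γ) = Σ_{i=1}^m −2·log(Γ_{ii}) + tr(Γ Γᵀ Σ̂) attains its minimum on the set S_E := {Γ ∈ ℝ^{m×m} : Γ_{ij} = 0 for all (i,j) ∉ E, and Γ_{ii} > 0 for all i}, and the minimizer is unique. -/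
/-!
The objective splits as the log-barrier `∑ᵢ -2 log Γᵢᵢ`, convex on the cone of matrices with
positive diagonal, plus the quadratic form `Γ ↦ tr (Γ Γᵀ Σ̂) = ∑ⱼ Γ₍·ⱼ₎ᵀ Σ̂ Γ₍·ⱼ₎`, which is
positive definite and hence strictly convex. So `ℓ` is strictly convex on the convex set `S_E`
and has at most one minimizer there.

For existence, the quadratic form dominates `c ‖Γ‖²` for some `c > 0`, while each `-2 log Γᵢᵢ`
is at least `-2 ‖Γ‖`. Hence a sublevel set of `ℓ` on `S_E` is bounded and keeps every `Γᵢᵢ`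
above a fixed positive constant: it is a compact set on which `ℓ` is continuous.
-/

open Set

theorem QuadraticMap.PosDef.strictConvexOn {E : Type*} [AddCommGroup E] [Module ℝ E]
    {Q : QuadraticForm ℝ E} (hQ : Q.PosDef) : StrictConvexOn ℝ univ Q := by
  refine ⟨convex_univ, fun x _ y _ hxy a b ha hb hab => ?_⟩
  have hcomb := QuadraticMap.map_add Q (a • x) (b • y)
  rw [Q.map_smul, Q.map_smul, Q.polar_smul_left, Q.polar_smul_right] at hcomb
  have hdiff := QuadraticMap.map_add Q x (-y)
  rw [Q.map_neg, Q.polar_neg_right, ← sub_eq_add_neg] at hdiff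
  have hpos := hQ (x - y) (sub_ne_zero.2 hxy)
  simp only [smul_eq_mul] at hcomb ⊢
  obtain rfl : b = 1 - a := by linarith
  -- `a Q x + b Q y - Q (a x + b y) = a b Q (x - y)`
  nlinarith [mul_pos (mul_pos ha hb) hpos]

theorem QuadraticMap.PosDef.exists_pos_mul_sq_norm_le {E : Type*} [NormedAddCommGroup E]
    [NormedSpace ℝ E] [FiniteDimensional ℝ E] {Q : QuadraticForm ℝ E} (hQ : Q.PosDef)
    (hQc : Continuous Q) : ∃ c > 0, ∀ x, c * ‖x‖ ^ 2 ≤ Q x := by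
  rcases subsingleton_or_nontrivial E with hE | hE
  · exact ⟨1, one_pos, fun x => by simp [Subsingleton.elim x 0]⟩
  obtain ⟨u, hu, hmin⟩ := (isCompact_sphere (0 : E) 1).exists_isMinOn
    (NormedSpace.sphere_nonempty.2 zero_le_one) hQc.continuousOn
  have hu0 : u ≠ 0 := ne_zero_of_mem_unit_sphere ⟨u, hu⟩
  refine ⟨Q u, hQ u hu0, fun x => ?_⟩
  rcases eq_or_ne x 0 with rfl | hx
  · simp
  have hnx : 0 < ‖x‖ := norm_pos_iff.2 hx
  have hsphere : ‖x‖⁻¹ • x ∈ Metric.sphere (0 : E) 1 := by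
    simp [norm_smul, hnx.ne']
  calc Q u * ‖x‖ ^ 2 ≤ Q (‖x‖⁻¹ • x) * ‖x‖ ^ 2 := by gcongr; exact hmin hsphere
    _ = Q x := by rw [Q.map_smul, smul_eq_mul]; field_simp

theorem IsClosed.exists_isMinOn_of_isBounded_sublevel {α : Type*} [PseudoMetricSpace α]
    [ProperSpace α] {f : α → ℝ} {s F : Set α} (hF : IsClosed F) (hFs : F ⊆ s)
    (hf : ContinuousOn f F) {x₀ : α} (hx₀ : x₀ ∈ s)
    (hsub : ∀ x ∈ s, f x ≤ f x₀ → x ∈ F)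
    (hbdd : Bornology.IsBounded {x ∈ s | f x ≤ f x₀}) : ∃ x ∈ s, IsMinOn f s x := by
  have hK : F ∩ f ⁻¹' Iic (f x₀) = {x ∈ s | f x ≤ f x₀} :=
    Subset.antisymm (fun x hx => ⟨hFs hx.1, hx.2⟩) fun x hx => ⟨hsub x hx.1 hx.2, hx.2⟩
  have hKc : IsCompact {x ∈ s | f x ≤ f x₀} :=
    Metric.isCompact_of_isClosed_isBounded (hK ▸ hf.preimage_isClosed_of_isClosed hF isClosed_Iic)
      hbdd
  obtain ⟨x, hx, hmin⟩ := hKc.exists_isMinOn ⟨x₀, hx₀, le_rfl⟩ (hf.mono (hK ▸ inter_subset_left))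
  refine ⟨x, hx.1, fun y hy => ?_⟩
  by_cases hy₀ : f y ≤ f x₀
  · exact hmin ⟨hy, hy₀⟩
  · exact (hmin ⟨hx₀, le_rfl⟩).trans (le_of_not_ge hy₀)

theorem ConvexOn.sum {𝕜 E β ι : Type*} [Semiring 𝕜] [PartialOrder 𝕜] [AddCommMonoid E]
    [AddCommMonoid β] [PartialOrder β] [IsOrderedAddMonoid β] [SMul 𝕜 E] [Module 𝕜 β]
    {s : Set E} (hs : Convex 𝕜 s) (t : Finset ι) {f : ι → E → β}
    (hf : ∀ i ∈ t, ConvexOn 𝕜 s (f i)) : ConvexOn 𝕜 s (fun x => ∑ i ∈ t, f i x) := by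
  classical
  induction t using Finset.induction_on with
  | empty => simpa using convexOn_const (0 : β) hs
  | insert i t hi ih =>
    simp only [Finset.sum_insert hi]
    exact (hf i (t.mem_insert_self i)).add (ih fun j hj => hf j (Finset.mem_insert_of_mem hj))

open Matrix Real

attribute [local instance] Matrix.normedAddCommGroup Matrix.normedSpace

variable {n : Type*}

def supportedPosDiag (E : Set (n × n)) : Set (Matrix n n ℝ) :=
  {Γ | (∀ i j, (i, j) ∉ E → Γ i j = 0) ∧ ∀ i, 0 < Γ i i}

theorem convex_supportedPosDiag (E : Set (n × n)) : Convex ℝ (supportedPosDiag E) := by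
  rintro Γ ⟨hΓE, hΓ⟩ Δ ⟨hΔE, hΔ⟩ a b ha hb hab
  refine ⟨fun i j hij => by simp [hΓE i j hij, hΔE i j hij], fun i => ?_⟩
  simpa using convex_Ioi (0 : ℝ) (hΓ i) (hΔ i) ha hb hab

variable [Fintype n]

noncomputable def negLogLik (Sig Γ : Matrix n n ℝ) : ℝ :=
  (∑ i, -2 * log (Γ i i)) + trace (Γ * Γᵀ * Sig)

theorem convexOn_sum_neg_two_log_diag :
    ConvexOn ℝ {Γ : Matrix n n ℝ | ∀ i, 0 < Γ i i} (fun Γ => ∑ i, -2 * log (Γ i i)) := by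
  have hconv : Convex ℝ {Γ : Matrix n n ℝ | ∀ i, 0 < Γ i i} :=
    fun Γ hΓ Δ hΔ a b ha hb hab i => by simpa using convex_Ioi (0 : ℝ) (hΓ i) (hΔ i) ha hb hab
  refine ConvexOn.sum hconv _ fun i _ => ?_
  refine (((strictConcaveOn_log_Ioi.concaveOn.neg.smul zero_le_two).comp_linearMap
    (entryLinearMap ℝ ℝ i i)).subset (fun Γ (hΓ : ∀ i, 0 < Γ i i) => hΓ i) hconv).congr
    fun Γ _ => ?_
  simp

theorem continuousOn_negLogLik (Sig : Matrix n n ℝ) :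
    ContinuousOn (negLogLik Sig) {Γ | ∀ i, 0 < Γ i i} := by
  unfold negLogLik
  fun_prop (disch := exact fun Γ hΓ => (hΓ _).ne')

theorem neg_two_log_diag_add_two_norm_nonneg {Γ : Matrix n n ℝ} {i : n} (hΓ : 0 < Γ i i) :
    0 ≤ -2 * log (Γ i i) + 2 * ‖Γ‖ := by
  have := (log_le_self hΓ.le).trans ((le_abs_self _).trans (norm_entry_le_entrywise_sup_norm Γ))
  linarith

theorem sum_add_le_negLogLik {Sig Γ : Matrix n n ℝ} {c : ℝ}
    (hc : c * ‖Γ‖ ^ 2 ≤ trace (Γ * Γᵀ * Sig)) :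
    (∑ i, (-2 * log (Γ i i) + 2 * ‖Γ‖)) + (c * ‖Γ‖ ^ 2 - 2 * Fintype.card n * ‖Γ‖) ≤
      negLogLik Sig Γ := by
  rw [negLogLik, Finset.sum_add_distrib, Finset.sum_const, Finset.card_univ, nsmul_eq_mul]
  linarith

theorem norm_le_of_negLogLik_le {Sig Γ : Matrix n n ℝ} {c B : ℝ} (hc₀ : 0 < c)
    (hc : c * ‖Γ‖ ^ 2 ≤ trace (Γ * Γᵀ * Sig)) (hΓ : ∀ i, 0 < Γ i i) (hB : negLogLik Sig Γ ≤ B) :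
    ‖Γ‖ ≤ max 1 ((|B| + 2 * Fintype.card n) / c) := by
  have hquad : c * ‖Γ‖ ^ 2 - 2 * Fintype.card n * ‖Γ‖ ≤ B := by
    have := Finset.sum_nonneg fun i (_ : i ∈ Finset.univ) =>
      neg_two_log_diag_add_two_norm_nonneg (hΓ i)
    linarith [sum_add_le_negLogLik hc]
  rcases le_total ‖Γ‖ 1 with h1 | h1
  · exact le_max_of_le_left h1
  · refine le_max_of_le_right ((le_div_iff₀ hc₀).2 ?_)
    have : c * ‖Γ‖ * ‖Γ‖ ≤ (|B| + 2 * Fintype.card n) * ‖Γ‖ := by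
      nlinarith [mul_nonneg (abs_nonneg B) (sub_nonneg.2 h1), le_abs_self B]
    nlinarith

theorem exp_le_diag_of_negLogLik_le {Sig Γ : Matrix n n ℝ} {c B : ℝ} (hc₀ : 0 < c)
    (hc : c * ‖Γ‖ ^ 2 ≤ trace (Γ * Γᵀ * Sig)) (hΓ : ∀ i, 0 < Γ i i) (hB : negLogLik Sig Γ ≤ B)
    (i : n) : exp (-(B + Fintype.card n ^ 2 / c) / 2) ≤ Γ i i := by
  rw [← le_log_iff_exp_le (hΓ i)]
  have hterm := Finset.single_le_sum (fun j _ => neg_two_log_diag_add_two_norm_nonneg (hΓ j))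
    (Finset.mem_univ i)
  have hsq : 0 ≤ c * (‖Γ‖ - Fintype.card n / c) ^ 2 := by positivity
  have hexpand : c * (‖Γ‖ - Fintype.card n / c) ^ 2 =
      c * ‖Γ‖ ^ 2 - 2 * Fintype.card n * ‖Γ‖ + Fintype.card n ^ 2 / c := by
    field_simp; ring
  linarith [sum_add_le_negLogLik hc, norm_nonneg Γ]

variable [DecidableEq n]

-- Columnwise: `tr (Γ Γᵀ Σ) = ∑ⱼ Γ₍·ⱼ₎ᵀ Σ Γ₍·ⱼ₎`, the `j`-th column being the `j`-th row of `Γᵀ`.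
def traceForm (Sig : Matrix n n ℝ) : QuadraticForm ℝ (Matrix n n ℝ) :=
  (QuadraticMap.pi fun _ : n => Sig.toQuadraticForm').comp
    ((transposeLinearEquiv n n ℝ ℝ).trans (ofLinearEquiv ℝ).symm).toLinearMap

theorem traceForm_apply (Sig Γ : Matrix n n ℝ) : traceForm Sig Γ = trace (Γ * Γᵀ * Sig) := by
  rw [Matrix.mul_assoc, trace_mul_comm, traceForm, QuadraticMap.comp_apply,
    QuadraticMap.pi_apply]
  simp [toQuadraticForm', toLinearMap₂'_apply', trace, mul_mul_apply]
  rfl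

theorem Matrix.PosDef.traceForm_posDef {Sig : Matrix n n ℝ} (hpd : Sig.PosDef) :
    (traceForm Sig).PosDef := fun Γ hΓ =>
  QuadraticMap.posDef_pi_iff.2 (fun _ => hpd.toQuadraticForm') Γᵀ (mt transpose_eq_zero.1 hΓ)

theorem continuous_traceForm (Sig : Matrix n n ℝ) : Continuous (traceForm Sig) := by
  simp only [funext (traceForm_apply Sig)]
  fun_prop

theorem strictConvexOn_negLogLik {Sig : Matrix n n ℝ} (hpd : Sig.PosDef) (E : Set (n × n)) :
    StrictConvexOn ℝ (supportedPosDiag E) (negLogLik Sig) := by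
  have hsplit : negLogLik Sig =
      (fun Γ : Matrix n n ℝ => ∑ i, -2 * log (Γ i i)) + ⇑(traceForm Sig) := by
    ext Γ; simp [negLogLik, traceForm_apply]
  rw [hsplit]
  exact (convexOn_sum_neg_two_log_diag.subset (fun Γ hΓ => hΓ.2) (convex_supportedPosDiag E))
    |>.add_strictConvexOn (hpd.traceForm_posDef.strictConvexOn.subset (subset_univ _)
      (convex_supportedPosDiag E))

theorem exists_isMinOn_negLogLik {Sig : Matrix n n ℝ} (hpd : Sig.PosDef) {E : Set (n × n)}
    (hE : ∀ i, (i, i) ∈ E) :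
    ∃ Γ ∈ supportedPosDiag E, IsMinOn (negLogLik Sig) (supportedPosDiag E) Γ := by
  obtain ⟨c, hc₀, hc⟩ := hpd.traceForm_posDef.exists_pos_mul_sq_norm_le (continuous_traceForm Sig)
  simp only [traceForm_apply] at hc
  have h1 : (1 : Matrix n n ℝ) ∈ supportedPosDiag E :=
    ⟨fun i j hij => one_apply_ne fun h => hij (h ▸ hE i), fun i => by simp⟩
  set ε := exp (-(negLogLik Sig 1 + Fintype.card n ^ 2 / c) / 2)
  have hF : IsClosed {Γ : Matrix n n ℝ | (∀ i j, (i, j) ∉ E → Γ i j = 0) ∧ ∀ i, ε ≤ Γ i i} := by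
    simp only [Set.ofPred_and, Set.ofPred_forall]
    exact (isClosed_iInter fun i => isClosed_iInter fun j => isClosed_iInter fun _ =>
      isClosed_eq (by fun_prop) continuous_const).inter
      (isClosed_iInter fun i => isClosed_le continuous_const (by fun_prop))
  have hFpos {Γ : Matrix n n ℝ} (hΓ : ∀ i, ε ≤ Γ i i) (i : n) : 0 < Γ i i :=
    (exp_pos _).trans_le (hΓ i)
  refine hF.exists_isMinOn_of_isBounded_sublevel (fun Γ hΓ => ⟨hΓ.1, hFpos hΓ.2⟩)
    ((continuousOn_negLogLik Sig).mono fun Γ hΓ => hFpos hΓ.2) h1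
    (fun Γ hΓ hB => ⟨hΓ.1, exp_le_diag_of_negLogLik_le hc₀ (hc Γ) hΓ.2 hB⟩) ?_
  refine (Metric.isBounded_closedBall (x := 0)
    (r := max 1 ((|negLogLik Sig 1| + 2 * Fintype.card n) / c))).subset fun Γ hΓ => ?_
  rw [mem_closedBall_zero_iff]
  exact norm_le_of_negLogLik_le hc₀ (hc Γ) hΓ.1.2 hΓ.2

open Matrix in
/-- Existence and uniqueness of the support-constrained maximum likelihood
estimator: for symmetric positive definite `Σ̂` and a support set `E` containing
the diagonal, `ℓ(Γ) = ∑ᵢ -2 log Γᵢᵢ + tr(Γ Γᵀ Σ̂)` attains its minimum on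
`S_E = {Γ : Γᵢⱼ = 0 for (i,j) ∉ E, Γᵢᵢ > 0}`, and the minimizer is unique. -/
theorem stmt_15 {m : ℕ} (Sig : Matrix (Fin m) (Fin m) ℝ) (hpd : Sig.PosDef)
    (E : Set (Fin m × Fin m)) (hE : ∀ i : Fin m, (i, i) ∈ E)
    (ℓ : Matrix (Fin m) (Fin m) ℝ → ℝ)
    (hℓ : ∀ Γ, ℓ Γ = (∑ i, -2 * Real.log (Γ i i)) + Matrix.trace (Γ * Γᵀ * Sig)) :
    ∃ Γ₀ : Matrix (Fin m) (Fin m) ℝ,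
      ((∀ i j : Fin m, (i, j) ∉ E → Γ₀ i j = 0) ∧ (∀ i, 0 < Γ₀ i i)) ∧
      (∀ Γ : Matrix (Fin m) (Fin m) ℝ,
        (∀ i j : Fin m, (i, j) ∉ E → Γ i j = 0) → (∀ i, 0 < Γ i i) →
        ℓ Γ₀ ≤ ℓ Γ) ∧
      (∀ Γ₁ : Matrix (Fin m) (Fin m) ℝ,
        (∀ i j : Fin m, (i, j) ∉ E → Γ₁ i j = 0) → (∀ i, 0 < Γ₁ i i) →
        (∀ Γ : Matrix (Fin m) (Fin m) ℝ,
          (∀ i j : Fin m, (i, j) ∉ E → Γ i j = 0) → (∀ i, 0 < Γ i i) →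
          ℓ Γ₁ ≤ ℓ Γ) →
        Γ₁ = Γ₀) := by
  obtain rfl : ℓ = negLogLik Sig := funext hℓ
  obtain ⟨Γ₀, hΓ₀, hmin⟩ := exists_isMinOn_negLogLik hpd hE
  refine ⟨Γ₀, hΓ₀, fun Γ hΓE hΓ => hmin ⟨hΓE, hΓ⟩, fun Γ₁ hΓ₁E hΓ₁ hmin₁ => ?_⟩
  exact (strictConvexOn_negLogLik hpd E).eq_of_isMinOn (fun Γ hΓ => hmin₁ Γ hΓ.1 hΓ.2) hmin
    ⟨hΓ₁E, hΓ₁⟩ hΓ₀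
end
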